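/- Under the dual error setting with coercivity constant α_A, one has ∑_{m=0}^{N−1} [ (εᵐ)ᵀ M εᵐ + Δt·(εᵐ)ᵀ A_sym εᵐ ] ≤ ((T + Δt)/α_A)·∑_{m=0}^{N−1} ‖ϱᵐ‖₋₁², where T = N·Δt. -/

import Mathlib

/-!
Test the scheme at step `m` with `εᵐ`. Since `M` is positive semidefinite,
`(εᵐ)ᵀ M εᵐ⁺¹ ≤ ((εᵐ)ᵀ M εᵐ + (εᵐ⁺¹)ᵀ M εᵐ⁺¹) / 2`, and by the dual pairing, Young's inequality
and coercivity, `Δt (ϱᵐ)ᵀ εᵐ` is absorbed into half of `Δt (εᵐ)ᵀ A_sym εᵐ` up to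
`Δt ‖ϱᵐ‖₋₁² / (2 α_A)`. This yields the one-step energy inequality
`Eₘ - Eₘ₊₁ + Δt (εᵐ)ᵀ A_sym εᵐ ≤ (Δt / α_A) ‖ϱᵐ‖₋₁²` with `Eₘ = (εᵐ)ᵀ M εᵐ`.
Summing it backwards from `Eᴺ = 0` bounds each `Eⱼ` and the total dissipation by
`(Δt / α_A) ∑ ‖ϱᵐ‖₋₁²`, whence the factor `N + 1`.
-/

open Matrix BigOperators Finset

/-- The energy norm `‖v‖_{G*} = √(vᵀ G* v)` induced by a matrix `G`. -/
noncomputable def normG {d : ℕ} (G : Matrix (Fin d) (Fin d) ℝ) (v : Fin d → ℝ) : ℝ :=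
  Real.sqrt (v ⬝ᵥ G.mulVec v)

/-- The dual norm `‖r‖₋₁ = sup_{v ≠ 0} (rᵀ v)/‖v‖_{G*}`. -/
noncomputable def dualNorm {d : ℕ} (G : Matrix (Fin d) (Fin d) ℝ) (r : Fin d → ℝ) : ℝ :=
  ⨆ v : {v : Fin d → ℝ // v ≠ 0}, (r ⬝ᵥ (v : Fin d → ℝ)) / normG G (v : Fin d → ℝ)

/-- The symmetric part `(A + Aᵀ)/2` of a matrix. -/
noncomputable def symPart {d : ℕ} (A : Matrix (Fin d) (Fin d) ℝ) : Matrix (Fin d) (Fin d) ℝ :=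
  ((1 : ℝ)/2) • (A + Aᵀ)

lemma sum_add_le_of_sub_succ_add_le {a b c : ℕ → ℝ} {N : ℕ} (ha₀ : 0 ≤ a 0)
    (hb : ∀ m, 0 ≤ b m) (hc : ∀ m, 0 ≤ c m) (haN : a N = 0)
    (hstep : ∀ m < N, a m - a (m + 1) + b m ≤ c m) :
    ∑ m ∈ range N, (a m + b m) ≤ (N + 1) * ∑ m ∈ range N, c m := by
  have htail : ∀ j ≤ N, a j + ∑ m ∈ Ico j N, b m ≤ ∑ m ∈ Ico j N, c m := by
    intro j hj
    have hsum := sum_le_sum fun m (hm : m ∈ Ico j N) => hstep m (mem_Ico.1 hm).2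
    have htel : ∑ m ∈ Ico j N, (a m - a (m + 1)) = a j := by
      rw [← neg_inj, ← sum_neg_distrib]
      simp only [neg_sub]
      rw [sum_Ico_sub a hj, haN, zero_sub]
    simpa only [sum_add_distrib, htel] using hsum
  have hmono : ∀ j, ∑ m ∈ Ico j N, c m ≤ ∑ m ∈ range N, c m := fun j =>
    sum_le_sum_of_subset_of_nonneg (by intro m; simp only [mem_Ico, mem_range]; omega)
      fun m _ _ => hc m
  have ha_le : ∀ j < N, a j ≤ ∑ m ∈ range N, c m := fun j hj =>
    calc a j ≤ a j + ∑ m ∈ Ico j N, b m := le_add_of_nonneg_right (sum_nonneg fun m _ => hb m)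
      _ ≤ ∑ m ∈ range N, c m := (htail j hj.le).trans (hmono j)
  have hb_le : ∑ m ∈ range N, b m ≤ ∑ m ∈ range N, c m := by
    have h0 := htail 0 N.zero_le
    rw [← range_eq_Ico] at h0
    linarith
  calc ∑ m ∈ range N, (a m + b m)
      = ∑ m ∈ range N, a m + ∑ m ∈ range N, b m := sum_add_distrib
    _ ≤ N * ∑ m ∈ range N, c m + ∑ m ∈ range N, c m := by
      refine add_le_add ?_ hb_le
      simpa using sum_le_sum fun m hm => ha_le m (mem_range.1 hm)
    _ = (N + 1) * ∑ m ∈ range N, c m := by ring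

lemma Matrix.PosSemidef.two_mul_dotProduct_mulVec_le {n : Type*} [Fintype n]
    {M : Matrix n n ℝ} (hM : M.PosSemidef) (u v : n → ℝ) :
    2 * (u ⬝ᵥ M *ᵥ v) ≤ u ⬝ᵥ M *ᵥ u + v ⬝ᵥ M *ᵥ v := by
  have h := hM.dotProduct_mulVec_nonneg (u - v)
  have hsymm : v ⬝ᵥ M *ᵥ u = u ⬝ᵥ M *ᵥ v := by
    rw [← dotProduct_transpose_mulVec, (isHermitian_iff_isSymm.mp hM.isHermitian).eq]
  simp only [star_trivial, mulVec_sub, sub_dotProduct, dotProduct_sub, hsymm] at h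
  linarith

section

variable {d : ℕ}

lemma dotProduct_symPart_mulVec (A : Matrix (Fin d) (Fin d) ℝ) (v : Fin d → ℝ) :
    v ⬝ᵥ symPart A *ᵥ v = v ⬝ᵥ A *ᵥ v := by
  simp only [symPart, smul_mulVec, add_mulVec, dotProduct_smul, dotProduct_add,
    dotProduct_transpose_mulVec, smul_eq_mul]
  ring

lemma dotProduct_mulVec_le_normG_mul_normG {G : Matrix (Fin d) (Fin d) ℝ} (hG : G.PosDef)
    (u v : Fin d → ℝ) : u ⬝ᵥ G *ᵥ v ≤ normG G u * normG G v := by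
  let := G.toSeminormedAddCommGroup hG.posSemidef
  let := G.toInnerProductSpace hG.posSemidef
  have hinner : ∀ x y : Fin d → ℝ, inner ℝ x y = x ⬝ᵥ G *ᵥ y := fun x y => by
    change (G *ᵥ y) ⬝ᵥ star x = _
    rw [star_trivial, dotProduct_comm]
  have hcs := real_inner_mul_inner_self_le u v
  simp only [hinner] at hcs
  calc u ⬝ᵥ G *ᵥ v ≤ √((u ⬝ᵥ G *ᵥ v) * (u ⬝ᵥ G *ᵥ v)) := Real.le_sqrt_of_sq_le (by rw [sq])
    _ ≤ √((u ⬝ᵥ G *ᵥ u) * (v ⬝ᵥ G *ᵥ v)) := Real.sqrt_le_sqrt hcs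
    _ = normG G u * normG G v :=
      Real.sqrt_mul (by simpa using hG.posSemidef.dotProduct_mulVec_nonneg u) _

lemma dotProduct_le_dualNorm_mul_normG {G : Matrix (Fin d) (Fin d) ℝ} (hG : G.PosDef)
    (r v : Fin d → ℝ) : r ⬝ᵥ v ≤ dualNorm G r * normG G v := by
  rcases eq_or_ne v 0 with rfl | hv
  · simp [normG]
  have hpos : ∀ {x : Fin d → ℝ}, x ≠ 0 → 0 < normG G x := fun hx =>
    Real.sqrt_pos.2 (by simpa using hG.dotProduct_mulVec_pos hx)
  have hbdd : BddAbove (Set.range fun x : {x : Fin d → ℝ // x ≠ 0} =>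
      (r ⬝ᵥ (x : Fin d → ℝ)) / normG G (x : Fin d → ℝ)) := by
    -- `G⁻¹ r` represents `r` in the `G`-inner product, so Cauchy–Schwarz bounds the quotients
    have hriesz : G *ᵥ (G⁻¹ *ᵥ r) = r := by
      rw [mulVec_mulVec, mul_nonsing_inv _ (isUnit_iff_ne_zero.2 hG.det_pos.ne'), one_mulVec]
    refine ⟨normG G (G⁻¹ *ᵥ r), ?_⟩
    rintro _ ⟨⟨x, hx⟩, rfl⟩
    rw [div_le_iff₀ (hpos hx)]
    calc r ⬝ᵥ x = (G⁻¹ *ᵥ r) ⬝ᵥ G *ᵥ x := by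
          rw [← dotProduct_transpose_mulVec, (isHermitian_iff_isSymm.mp hG.isHermitian).eq,
            hriesz, dotProduct_comm]
      _ ≤ _ := dotProduct_mulVec_le_normG_mul_normG hG _ _
  have hle := le_ciSup hbdd ⟨v, hv⟩
  rwa [div_le_iff₀ (hpos hv)] at hle

lemma energy_sub_succ_add_le {G M A : Matrix (Fin d) (Fin d) ℝ} (hG : G.PosDef)
    (hM : M.PosSemidef) {Δt α : ℝ} (hΔt : 0 ≤ Δt) (hα : 0 < α)
    (hcoA : ∀ v, α * normG G v ^ 2 ≤ v ⬝ᵥ symPart A *ᵥ v) {e e' r : Fin d → ℝ}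
    (hstep : (M + Δt • Aᵀ) *ᵥ e = M *ᵥ e' - Δt • r) :
    e ⬝ᵥ M *ᵥ e - e' ⬝ᵥ M *ᵥ e' + Δt * (e ⬝ᵥ symPart A *ᵥ e) ≤
      Δt / α * dualNorm G r ^ 2 := by
  have htest : e ⬝ᵥ M *ᵥ e + Δt * (e ⬝ᵥ symPart A *ᵥ e) =
      e ⬝ᵥ M *ᵥ e' - Δt * (r ⬝ᵥ e) := by
    have h := congrArg (e ⬝ᵥ ·) hstep
    simp only [add_mulVec, smul_mulVec, dotProduct_add, dotProduct_smul, dotProduct_sub,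
      smul_eq_mul, dotProduct_transpose_mulVec] at h
    rw [dotProduct_symPart_mulVec, dotProduct_comm r, h]
  have hcross := hM.two_mul_dotProduct_mulVec_le e e'
  have hdual : -(r ⬝ᵥ e) ≤ dualNorm G r * normG G e := by
    simpa [normG, mulVec_neg, dotProduct_neg, neg_dotProduct] using
      dotProduct_le_dualNorm_mul_normG hG r (-e)
  -- Young's inequality `ρ n ≤ ρ² / (2α) + α n² / 2`, then coercivity absorbs `α n²`
  have hyoung : -(r ⬝ᵥ e) ≤ dualNorm G r ^ 2 / (2 * α) + (e ⬝ᵥ symPart A *ᵥ e) / 2 := by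
    have hsq : 0 ≤ (dualNorm G r - α * normG G e) ^ 2 / (2 * α) := by positivity
    have hexp : (dualNorm G r - α * normG G e) ^ 2 / (2 * α) = dualNorm G r ^ 2 / (2 * α)
        - dualNorm G r * normG G e + α * normG G e ^ 2 / 2 := by
      field_simp; ring
    linarith [hcoA e]
  have hscaled := mul_le_mul_of_nonneg_left hyoung hΔt
  have hrewrite : Δt * (dualNorm G r ^ 2 / (2 * α) + (e ⬝ᵥ symPart A *ᵥ e) / 2) =
      (Δt / α * dualNorm G r ^ 2 + Δt * (e ⬝ᵥ symPart A *ᵥ e)) / 2 := by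
    field_simp
  rw [hrewrite] at hscaled
  linarith

end

theorem stmt11_general {d : ℕ}
    (G M A : Matrix (Fin d) (Fin d) ℝ) (hG : G.PosDef) (hM : M.PosSemidef)
    (Δt : ℝ) (hΔt : 0 < Δt) (N : ℕ)
    (αA : ℝ) (hαA : 0 < αA)
    (hcoA : ∀ v : Fin d → ℝ, αA * (normG G v)^2 ≤ v ⬝ᵥ (symPart A).mulVec v)
    (ε ϱ : ℕ → Fin d → ℝ) (hεN : ε N = 0)
    (hstep : ∀ k, k < N →
      (M + Δt • Aᵀ).mulVec (ε k) = M.mulVec (ε (k + 1)) - Δt • ϱ k) :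
    ∑ m ∈ Finset.range N,
        (ε m ⬝ᵥ M.mulVec (ε m) + Δt * (ε m ⬝ᵥ (symPart A).mulVec (ε m))) ≤
      ((N * Δt + Δt) / αA) * ∑ m ∈ Finset.range N, (dualNorm G (ϱ m))^2 := by
  have hsum := sum_add_le_of_sub_succ_add_le (N := N)
    (a := fun m => ε m ⬝ᵥ M *ᵥ ε m) (b := fun m => Δt * (ε m ⬝ᵥ symPart A *ᵥ ε m))
    (c := fun m => Δt / αA * dualNorm G (ϱ m) ^ 2)
    (by simpa using hM.dotProduct_mulVec_nonneg (ε 0))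
    (fun m => mul_nonneg hΔt.le ((by positivity : 0 ≤ αA * normG G (ε m) ^ 2).trans (hcoA _)))
    (fun m => by positivity) (by simp [hεN])
    (fun m hm => energy_sub_succ_add_le hG hM hΔt.le hαA hcoA (hstep m hm))
  exact hsum.trans_eq (by rw [← mul_sum]; ring)

theorem stmt11 {d : ℕ} (hd : 1 ≤ d)
    (G M A : Matrix (Fin d) (Fin d) ℝ) (hG : G.PosDef) (hM : M.PosSemidef)
    (Δt : ℝ) (hΔt : 0 < Δt) (N : ℕ) (hN : 1 ≤ N)
    (αA : ℝ) (hαA : 0 < αA)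
    (hcoA : ∀ v : Fin d → ℝ, αA * (normG G v)^2 ≤ v ⬝ᵥ (symPart A).mulVec v)
    (ε ϱ : ℕ → Fin d → ℝ) (hεN : ε N = 0)
    (hstep : ∀ k, k < N →
      (M + Δt • Aᵀ).mulVec (ε k) = M.mulVec (ε (k + 1)) - Δt • ϱ k) :
    ∑ m ∈ Finset.range N,
        (ε m ⬝ᵥ M.mulVec (ε m) + Δt * (ε m ⬝ᵥ (symPart A).mulVec (ε m))) ≤
      ((N * Δt + Δt) / αA) * ∑ m ∈ Finset.range N, (dualNorm G (ϱ m))^2 :=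
  stmt11_general G M A hG hM Δt hΔt N αA hαA hcoA ε ϱ hεN hstep
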